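/- Uniqueness of graph states: For a simple graph G on n vertices, the stabiliser generators Kᵥ = Xᵥ ∏_{u∼v} Z_u pairwise commute, and the joint +1 eigenspace {ψ ∈ (ℂ²)^{⊗n} : Kᵥψ = ψ for all v} is one-dimensional, spanned by |G⟩ = ∏_{(u,v)∈E} CZ_{uv} |+⟩^{⊗n}. -/
import Mathlib


open Matrix

noncomputable def Xg : Matrix (Fin 2) (Fin 2) ℂ := !![0, 1; 1, 0]
noncomputable def Zg : Matrix (Fin 2) (Fin 2) ℂ := !![1, 0; 0, -1]

/-- Tensor product of single-qubit matrices over n factors. -/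
noncomputable def qtensor {n : ℕ} (f : Fin n → Matrix (Fin 2) (Fin 2) ℂ) :
    Matrix (Fin n → Fin 2) (Fin n → Fin 2) ℂ :=
  fun i j => ∏ v, f v (i v) (j v)

/-- Graph-state stabiliser generator K_v = X_v ∏_{u ∼ v} Z_u. -/
noncomputable def Kgen {n : ℕ} (G : SimpleGraph (Fin n)) [DecidableRel G.Adj]
    (v : Fin n) : Matrix (Fin n → Fin 2) (Fin n → Fin 2) ℂ :=
  qtensor (fun u => if u = v then Xg else if G.Adj v u then Zg else 1)

/-- The graph state |G⟩ = ∏_{(u,v)∈E} CZ_{uv} |+⟩^{⊗n}: since each CZ is diagonal,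
its coefficient on bit string x is (1/√2)^n times a product of signs, one −1 per
edge whose two endpoints are both 1 in x. -/
noncomputable def graphState {n : ℕ} (G : SimpleGraph (Fin n)) [DecidableRel G.Adj] :
    (Fin n → Fin 2) → ℂ :=
  fun x =>
    (∏ p ∈ Finset.univ.filter (fun p : Fin n × Fin n => p.1 < p.2 ∧ G.Adj p.1 p.2),
      (if x p.1 = 1 ∧ x p.2 = 1 then (-1 : ℂ) else 1)) * ((Real.sqrt 2 : ℂ))⁻¹ ^ n

lemma Xg_apply (a b : Fin 2) : Xg a b = if a = b then 0 else 1 := by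
  fin_cases a <;> fin_cases b <;> simp [Xg]

lemma Zg_apply (a b : Fin 2) : Zg a b = if a = b then (-1 : ℂ) ^ (a : ℕ) else 0 := by
  fin_cases a <;> fin_cases b <;> simp [Zg]

lemma fin2_ne {a b : Fin 2} (h : a ≠ b) : b = a + 1 := by revert h; revert a b; decide

lemma fin2_add_one_ne (a : Fin 2) : a + 1 ≠ a := by revert a; decide

def qflip {n : ℕ} (v : Fin n) (x : Fin n → Fin 2) : Fin n → Fin 2 :=
  Function.update x v (x v + 1)

lemma qflip_self {n : ℕ} (v : Fin n) (x : Fin n → Fin 2) : qflip v x v = x v + 1 :=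
  Function.update_self _ _ _

lemma qflip_ne {n : ℕ} {v u : Fin n} (h : u ≠ v) (x : Fin n → Fin 2) : qflip v x u = x u :=
  Function.update_of_ne h _ _

lemma qflip_qflip {n : ℕ} (v : Fin n) (x : Fin n → Fin 2) : qflip v (qflip v x) = x := by
  funext u
  by_cases h : u = v
  · subst h; simp only [qflip_self, qflip, Function.update_self]
    have : ∀ a : Fin 2, a + 1 + 1 = a := by decide
    exact this _
  · rw [qflip_ne h, qflip_ne h]

lemma qflip_comm {n : ℕ} (u v : Fin n) (x : Fin n → Fin 2) :
    qflip u (qflip v x) = qflip v (qflip u x) := by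
  by_cases huv : u = v
  · subst huv; rfl
  · funext w
    by_cases h1 : w = u
    · subst h1
      rw [qflip_self, qflip_ne huv, qflip_ne huv, qflip_self]
    · by_cases h2 : w = v
      · subst h2
        rw [qflip_ne h1, qflip_self, qflip_self, qflip_ne h1]
      · rw [qflip_ne h1, qflip_ne h2, qflip_ne h2, qflip_ne h1]

noncomputable def qsgn {n : ℕ} (G : SimpleGraph (Fin n)) [DecidableRel G.Adj]
    (v : Fin n) (x : Fin n → Fin 2) : ℂ :=
  ∏ u, if G.Adj v u then (-1 : ℂ) ^ (x u : ℕ) else 1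

lemma Kgen_apply {n : ℕ} (G : SimpleGraph (Fin n)) [DecidableRel G.Adj]
    (v : Fin n) (x j : Fin n → Fin 2) :
    Kgen G v x j = if j = qflip v x then qsgn G v x else 0 := by
  unfold Kgen qtensor
  by_cases h : j = qflip v x
  · subst h
    rw [if_pos rfl]
    unfold qsgn
    rw [← Finset.prod_erase_mul _ _ (Finset.mem_univ v),
        ← Finset.prod_erase_mul _ _ (Finset.mem_univ v)]
    congr 1
    · apply Finset.prod_congr rfl
      intro u hu
      have hu' : u ≠ v := Finset.ne_of_mem_erase hu
      beta_reduce
      rw [if_neg hu', qflip_ne hu']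
      by_cases ha : G.Adj v u
      · rw [if_pos ha, if_pos ha, Zg_apply, if_pos rfl]
      · rw [if_neg ha, if_neg ha, Matrix.one_apply_eq]
    · beta_reduce
      rw [if_pos rfl, qflip_self, Xg_apply, if_neg (Ne.symm (fin2_add_one_ne _)),
        if_neg (G.irrefl (v := v))]
  · rw [if_neg h]
    by_cases hv : j v = x v
    · apply Finset.prod_eq_zero (Finset.mem_univ v)
      beta_reduce
      rw [if_pos rfl, Xg_apply, if_pos hv.symm]
    · have hex : ∃ u, j u ≠ qflip v x u := by
        by_contra hc; push_neg at hc; exact h (funext hc)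
      obtain ⟨u, hu⟩ := hex
      have huv : u ≠ v := by
        rintro rfl
        rw [qflip_self] at hu
        exact hu (fin2_ne (Ne.symm hv))
      rw [qflip_ne huv] at hu
      apply Finset.prod_eq_zero (Finset.mem_univ u)
      beta_reduce
      rw [if_neg huv]
      by_cases ha : G.Adj v u
      · rw [if_pos ha, Zg_apply, if_neg (fun hh => hu hh.symm)]
      · rw [if_neg ha, Matrix.one_apply_ne (fun hh => hu hh.symm)]

lemma Kgen_mulVec {n : ℕ} (G : SimpleGraph (Fin n)) [DecidableRel G.Adj]
    (v : Fin n) (ψ : (Fin n → Fin 2) → ℂ) (x : Fin n → Fin 2) :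
    (Kgen G v *ᵥ ψ) x = qsgn G v x * ψ (qflip v x) := by
  unfold Matrix.mulVec dotProduct
  simp [Kgen_apply, ite_mul, zero_mul]

lemma qsgn_mul_self {n : ℕ} (G : SimpleGraph (Fin n)) [DecidableRel G.Adj]
    (v : Fin n) (x : Fin n → Fin 2) : qsgn G v x * qsgn G v x = 1 := by
  unfold qsgn
  rw [← Finset.prod_mul_distrib]
  apply Finset.prod_eq_one
  intro u _
  by_cases ha : G.Adj v u
  · rw [if_pos ha, ← mul_pow, neg_one_mul, neg_neg, one_pow]
  · rw [if_neg ha, one_mul]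

lemma neg_pow_flip (a : Fin 2) : (-1 : ℂ) ^ ((a + 1 : Fin 2) : ℕ) = -1 * (-1) ^ (a : ℕ) := by
  fin_cases a <;> norm_num [show ((1:Fin 2)+1) = (0:Fin 2) from rfl, show ((0:Fin 2)+1) = (1:Fin 2) from rfl]

lemma qsgn_qflip {n : ℕ} (G : SimpleGraph (Fin n)) [DecidableRel G.Adj]
    (v u : Fin n) (x : Fin n → Fin 2) :
    qsgn G v (qflip u x) = (if G.Adj v u then (-1 : ℂ) else 1) * qsgn G v x := by
  unfold qsgn
  rw [← Finset.prod_erase_mul _ _ (Finset.mem_univ u),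
      ← Finset.prod_erase_mul _ (fun w => if G.Adj v w then (-1 : ℂ) ^ ((x w : ℕ)) else 1)
        (Finset.mem_univ u)]
  have h1 : ∏ w ∈ Finset.univ.erase u, (if G.Adj v w then (-1 : ℂ) ^ ((qflip u x w : ℕ)) else 1)
      = ∏ w ∈ Finset.univ.erase u, (if G.Adj v w then (-1 : ℂ) ^ ((x w : ℕ)) else 1) := by
    apply Finset.prod_congr rfl
    intro w hw
    rw [qflip_ne (Finset.ne_of_mem_erase hw)]
  rw [h1]
  have h2 : (if G.Adj v u then (-1 : ℂ) ^ ((qflip u x u : ℕ)) else 1)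
      = (if G.Adj v u then (-1 : ℂ) else 1) * (if G.Adj v u then (-1 : ℂ) ^ ((x u : ℕ)) else 1) := by
    by_cases ha : G.Adj v u
    · rw [if_pos ha, if_pos ha, if_pos ha, qflip_self, neg_pow_flip]
    · rw [if_neg ha, if_neg ha, if_neg ha, one_mul]
  rw [h2]; ring

lemma e_flip1 (a b : Fin 2) :
    (if a + 1 = 1 ∧ b = 1 then (-1 : ℂ) else 1)
      = (-1 : ℂ) ^ (b : ℕ) * (if a = 1 ∧ b = 1 then (-1 : ℂ) else 1) := by
  fin_cases a <;> fin_cases b <;>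
    norm_num [show ((1:Fin 2)+1) = (0:Fin 2) from rfl, show ((0:Fin 2)+1) = (1:Fin 2) from rfl]

lemma e_flip2 (a b : Fin 2) :
    (if a = 1 ∧ b + 1 = 1 then (-1 : ℂ) else 1)
      = (-1 : ℂ) ^ (a : ℕ) * (if a = 1 ∧ b = 1 then (-1 : ℂ) else 1) := by
  fin_cases a <;> fin_cases b <;>
    norm_num [show ((1:Fin 2)+1) = (0:Fin 2) from rfl, show ((0:Fin 2)+1) = (1:Fin 2) from rfl]

lemma graphState_qflip {n : ℕ} (G : SimpleGraph (Fin n)) [DecidableRel G.Adj]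
    (v : Fin n) (x : Fin n → Fin 2) :
    graphState G (qflip v x) = qsgn G v x * graphState G x := by
  unfold graphState
  rw [← mul_assoc]
  congr 1
  set S := Finset.univ.filter (fun p : Fin n × Fin n => p.1 < p.2 ∧ G.Adj p.1 p.2) with hS
  have step1 : ∀ p ∈ S, (if qflip v x p.1 = 1 ∧ qflip v x p.2 = 1 then (-1 : ℂ) else 1)
      = (if p.1 = v then (-1 : ℂ) ^ (x p.2 : ℕ) else if p.2 = v then (-1 : ℂ) ^ (x p.1 : ℕ) else 1)
        * (if x p.1 = 1 ∧ x p.2 = 1 then (-1 : ℂ) else 1) := by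
    intro p hp
    simp only [hS, Finset.mem_filter] at hp
    have hne : p.1 ≠ p.2 := ne_of_lt hp.2.1
    by_cases h1 : p.1 = v
    · have h2 : p.2 ≠ v := by rw [← h1]; exact hne.symm
      have h2' : p.2 ≠ p.1 := by rw [h1]; exact h2
      rw [if_pos h1, ← h1, qflip_self, qflip_ne h2']
      exact e_flip1 _ _
    · rw [if_neg h1, qflip_ne h1]
      by_cases h2 : p.2 = v
      · rw [if_pos h2, ← h2, qflip_self]
        exact e_flip2 _ _
      · rw [if_neg h2, qflip_ne h2, one_mul]
  rw [Finset.prod_congr rfl step1, Finset.prod_mul_distrib]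
  congr 1
  rw [← Finset.prod_filter_of_ne
      (p := fun p : Fin n × Fin n => p.1 = v ∨ p.2 = v)
      (fun p _ hne => by
        by_contra hc
        rw [if_neg (fun h => hc (Or.inl h)), if_neg (fun h => hc (Or.inr h))] at hne
        exact hne rfl)]
  have hqsgn : qsgn G v x = ∏ u ∈ Finset.univ.filter (G.Adj v), (-1 : ℂ) ^ (x u : ℕ) := by
    unfold qsgn
    rw [Finset.prod_filter]
  rw [hqsgn]
  apply Finset.prod_nbij' (fun p : Fin n × Fin n => if p.1 = v then p.2 else p.1)
    (fun u => if v < u then (v, u) else (u, v))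
  · intro p hp
    simp only [hS, Finset.mem_filter, Finset.mem_univ, true_and] at hp ⊢
    obtain ⟨⟨hlt, hadj⟩, hor⟩ := hp
    by_cases h1 : p.1 = v
    · rw [if_pos h1, ← h1]; exact hadj
    · rw [if_neg h1]
      rcases hor with h | h
      · exact absurd h h1
      · rw [← h]; exact hadj.symm
  · intro u hu
    simp only [Finset.mem_filter, Finset.mem_univ, true_and] at hu
    simp only [hS, Finset.mem_filter, Finset.mem_univ, true_and]
    have hne : v ≠ u := G.ne_of_adj hu
    by_cases hlt : v < u
    · rw [if_pos hlt]; exact ⟨⟨hlt, hu⟩, Or.inl rfl⟩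
    · rw [if_neg hlt]
      have : u < v := lt_of_le_of_ne (le_of_not_gt hlt) (fun hh => hne hh.symm)
      exact ⟨⟨this, hu.symm⟩, Or.inr rfl⟩
  · intro p hp
    simp only [hS, Finset.mem_filter, Finset.mem_univ, true_and] at hp
    obtain ⟨⟨hlt, hadj⟩, hor⟩ := hp
    by_cases h1 : p.1 = v
    · rw [if_pos h1]
      have : v < p.2 := h1 ▸ hlt
      rw [if_pos this, ← h1]
    · rw [if_neg h1]
      have h2 : p.2 = v := hor.resolve_left h1
      have : ¬ v < p.1 := by rw [← h2]; exact not_lt_of_gt hlt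
      rw [if_neg this, ← h2]
  · intro u hu
    simp only [Finset.mem_filter, Finset.mem_univ, true_and] at hu
    have hne : v ≠ u := G.ne_of_adj hu
    by_cases hlt : v < u
    · rw [if_pos hlt]; simp
    · rw [if_neg hlt]
      show (if u = v then v else u) = u
      rw [if_neg (fun hh => hne hh.symm)]
  · intro p hp
    simp only [hS, Finset.mem_filter, Finset.mem_univ, true_and] at hp
    obtain ⟨⟨hlt, hadj⟩, hor⟩ := hp
    by_cases h1 : p.1 = v
    · rw [if_pos h1, if_pos h1]
    · rw [if_neg h1, if_neg h1, if_pos (hor.resolve_left h1)]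

lemma fin2_ne_zero {a : Fin 2} (h : a ≠ 0) : a = 1 := by revert h; revert a; decide

lemma graphState_zero {n : ℕ} (G : SimpleGraph (Fin n)) [DecidableRel G.Adj] :
    graphState G (fun _ => 0) = ((Real.sqrt 2 : ℂ))⁻¹ ^ n := by
  unfold graphState
  rw [Finset.prod_eq_one, one_mul]
  intro p _
  rw [if_neg]
  rintro ⟨h1, _⟩
  have hne : ¬ ((0 : Fin 2) = 1) := by decide
  exact hne h1

lemma sqrt2_pow_ne {n : ℕ} : ((Real.sqrt 2 : ℂ))⁻¹ ^ n ≠ 0 := by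
  apply pow_ne_zero
  apply inv_ne_zero
  rw [Complex.ofReal_ne_zero]
  positivity

/-- The stabiliser generators pairwise commute, |G⟩ is their joint +1 eigenvector,
|G⟩ ≠ 0, and the joint +1 eigenspace is one-dimensional, spanned by |G⟩. -/
theorem graph_state_unique {n : ℕ} (G : SimpleGraph (Fin n)) [DecidableRel G.Adj] :
    (∀ u v, Kgen G u * Kgen G v = Kgen G v * Kgen G u) ∧
    (∀ v, Kgen G v *ᵥ graphState G = graphState G) ∧
    graphState G ≠ 0 ∧
    (∀ ψ : (Fin n → Fin 2) → ℂ, (∀ v, Kgen G v *ᵥ ψ = ψ) →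
      ∃ c : ℂ, ψ = c • graphState G) := by
  have hg0 := graphState_zero G
  refine ⟨?_, ?_, ?_, ?_⟩
  · have hKK : ∀ (u v : Fin n) (x z : Fin n → Fin 2), (Kgen G u * Kgen G v) x z
        = if z = qflip v (qflip u x) then qsgn G u x * qsgn G v (qflip u x) else 0 := by
      intro u v x z
      rw [Matrix.mul_apply]
      rw [Finset.sum_eq_single (qflip u x)]
      · rw [Kgen_apply, if_pos rfl, Kgen_apply, mul_ite, mul_zero]
      · intro y _ hne
        rw [Kgen_apply, if_neg hne, zero_mul]
      · intro h; exact absurd (Finset.mem_univ _) h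
    intro u v
    ext x z
    rw [hKK, hKK, qflip_comm v u x]
    by_cases h : z = qflip u (qflip v x)
    · rw [if_pos h, if_pos h, qsgn_qflip, qsgn_qflip]
      by_cases hadj : G.Adj u v
      · rw [if_pos hadj, if_pos hadj.symm]; ring
      · rw [if_neg hadj, if_neg (fun hh => hadj hh.symm)]; ring
    · rw [if_neg h, if_neg h]
  · intro v
    funext x
    rw [Kgen_mulVec, graphState_qflip, ← mul_assoc, qsgn_mul_self, one_mul]
  · intro h
    apply sqrt2_pow_ne (n := n)
    rw [← hg0, h]
    rfl
  · intro ψ hψ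
    have hrec : ∀ (v : Fin n) (x : Fin n → Fin 2), ψ (qflip v x) = qsgn G v x * ψ x := by
      intro v x
      have h := congrFun (hψ v) x
      rw [Kgen_mulVec] at h
      calc ψ (qflip v x) = (qsgn G v x * qsgn G v x) * ψ (qflip v x) := by
            rw [qsgn_mul_self, one_mul]
        _ = qsgn G v x * (qsgn G v x * ψ (qflip v x)) := by ring
        _ = qsgn G v x * ψ x := by rw [h]
    set c : ℂ := ψ (fun _ => 0) / graphState G (fun _ => 0) with hc
    set φ : (Fin n → Fin 2) → ℂ := fun x => ψ x - c * graphState G x with hφ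
    have hrecφ : ∀ (v : Fin n) (x : Fin n → Fin 2), φ (qflip v x) = qsgn G v x * φ x := by
      intro v x
      simp only [hφ]
      rw [hrec, graphState_qflip]
      ring
    have hφ0 : φ (fun _ => 0) = 0 := by
      simp only [hφ, hc]
      rw [div_mul_cancel₀ _ (hg0 ▸ sqrt2_pow_ne), sub_self]
    have main : ∀ k (x : Fin n → Fin 2), (∑ u, (x u : ℕ)) ≤ k → φ x = 0 := by
      intro k
      induction k with
      | zero =>
        intro x hx
        have hx0 : x = fun _ => 0 := by
          funext u
          have := Finset.sum_eq_zero_iff.mp (Nat.le_zero.mp hx) u (Finset.mem_univ u)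
          exact Fin.ext this
        rw [hx0]; exact hφ0
      | succ k ih =>
        intro x hx
        by_cases h0 : ∀ u, x u = 0
        · have hx0 : x = fun _ => 0 := funext h0
          rw [hx0]; exact hφ0
        · push_neg at h0
          obtain ⟨v, hv⟩ := h0
          have hxv : x v = 1 := fin2_ne_zero hv
          set y := qflip v x with hy
          have hsum : (∑ u, (y u : ℕ)) ≤ k := by
            have h1 : ∑ u ∈ Finset.univ.erase v, (y u : ℕ) + (y v : ℕ) = ∑ u, (y u : ℕ) :=
              Finset.sum_erase_add _ _ (Finset.mem_univ v)
            have h2 : ∑ u ∈ Finset.univ.erase v, (x u : ℕ) + (x v : ℕ) = ∑ u, (x u : ℕ) :=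
              Finset.sum_erase_add _ _ (Finset.mem_univ v)
            have h3 : ∑ u ∈ Finset.univ.erase v, (y u : ℕ)
                = ∑ u ∈ Finset.univ.erase v, (x u : ℕ) := by
              apply Finset.sum_congr rfl
              intro u hu
              rw [hy, qflip_ne (Finset.ne_of_mem_erase hu)]
            have h4 : y v = 0 := by
              rw [hy, qflip_self, hxv]
              rfl
            omega
          have hx' : x = qflip v y := (qflip_qflip v x).symm
          rw [hx', hrecφ, ih y hsum, mul_zero]
    refine ⟨c, funext fun x => ?_⟩
    have hthis := main _ x le_rfl
    simp only [hφ] at hthis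
    rw [sub_eq_zero.mp hthis]
    simp [Pi.smul_apply, smul_eq_mul]
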